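/- Let K be a field with fixed algebraic closure K̄ and let Z be a scheme of finite type over K. Assume that for every prime number p there exists an algebraic separable extension K_p of K inside K̄ such that every finite intermediate field F with K ⊆ F ⊆ K_p has degree [F:K] prime to p, and such that gcd{[M:K_p] : M a finite extension of K_p inside K̄ with Z(M) ≠ ∅} = 1. Then gcd{[L:K] : L a finite extension of K inside K̄ with Z(L) ≠ ∅} = 1; that is, Z admits a zero-cycle of degree 1 over K. -/

import Mathlib

open AlgebraicGeometry CategoryTheory

universe u

/-- `D ⊆ ℕ` has greatest common divisor `1`, expressed by the existence of a finite subset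
whose gcd is `1`. -/
def HasGcdOne (D : Set ℕ) : Prop :=
  ∃ s : Finset ℕ, ↑s ⊆ D ∧ s.gcd id = 1

/-- For a scheme `Z` over `Spec K` (via `fZ`) and a commutative ring `M` equipped with a ring
homomorphism `φ : K →+* M`, this says that `Z` has an `M`-point over `K`, i.e. there is a
morphism `Spec M ⟶ Z` of schemes over `Spec K`. -/
def HasPointOver {K : Type u} [CommRing K] {Z : Scheme.{u}}
    (fZ : Z ⟶ Spec (CommRingCat.of K)) (M : Type u) [CommRing M] (φ : K →+* M) : Prop :=
  ∃ g : Spec (CommRingCat.of M) ⟶ Z, g ≫ fZ = Spec.map (CommRingCat.ofHom φ)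

/-!
Fix a prime `p`. Some finite extension `M` of `K_p` of degree prime to `p` carries a point, and
since `Z` is locally of finite type that point is already defined over a finite extension `L` of
`K` inside `M`. The finitely many `K_p`-coordinates describing the ring structure of `K_p L` lie
in a finite extension `F ⊆ K_p` of `K`, and over it `[F L : F] = [K_p L : K_p]`, a divisor of
`[M : K_p]`. Hence `[F L : K] = [F : K] [F L : F]` is prime to `p`, and `F L` carries a point.
-/

theorem hasGcdOne_iff {D : Set ℕ} :
    HasGcdOne D ↔ ∀ p : ℕ, p.Prime → ∃ n ∈ D, ¬ p ∣ n := by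
  constructor
  · rintro ⟨s, hsD, hs⟩ p hp
    by_contra! h
    have : p ∣ s.gcd id := Finset.dvd_gcd fun n hn => h n (hsD hn)
    exact hp.one_lt.ne' (Nat.dvd_one.1 (hs ▸ this))
  · intro h
    choose! f hfD hf using h
    classical
    refine ⟨insert (f 2) ((f 2).primeFactors.image f), ?_,
      Nat.eq_one_iff_not_exists_prime_dvd.2 fun q hq hqs => ?_⟩
    · simp only [Finset.coe_insert, Finset.coe_image, Set.insert_subset_iff,
        Set.image_subset_iff]
      exact ⟨hfD 2 Nat.prime_two, fun q hq => hfD q (Nat.prime_of_mem_primeFactors hq)⟩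
    · have hq₂ : q ∈ (f 2).primeFactors := Nat.mem_primeFactors.2
        ⟨hq, hqs.trans (Finset.gcd_dvd (Finset.mem_insert_self _ _)),
          fun h₀ => hf 2 Nat.prime_two (h₀ ▸ dvd_zero 2)⟩
      exact hf q hq (hqs.trans (Finset.gcd_dvd
        (Finset.mem_insert_of_mem (Finset.mem_image_of_mem f hq₂))))

open IntermediateField Module

theorem Module.Basis.apply_mem_span_range_comp {ι R M N : Type*} [Semiring R]
    [AddCommMonoid M] [Module R M] [AddCommMonoid N] [Module R N] (b : Basis ι R M)
    (f : M →ₗ[R] N) (x : M) :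
    f x ∈ Submodule.span R (Set.range (f ∘ b)) := by
  rw [Set.range_comp, ← Submodule.map_span]
  exact Submodule.mem_map_of_mem (b.mem_span x)

namespace IntermediateField

variable {K Ω : Type*} [Field K] [Field Ω] [Algebra K Ω]

theorem relfinrank_restrictScalars (F : IntermediateField K Ω) (X : IntermediateField F Ω) :
    F.relfinrank (X.restrictScalars K) = finrank F X := by
  have h : F ≤ X.restrictScalars K := fun x hx => X.algebraMap_mem ⟨x, hx⟩
  rw [relfinrank_eq_finrank_of_le h]
  rfl

theorem relfinrank_sup_eq_finrank_adjoin (A L : IntermediateField K Ω) :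
    A.relfinrank (A ⊔ L) = finrank A (adjoin A (L : Set Ω)) := by
  rw [← relfinrank_restrictScalars, restrictScalars_adjoin_eq_sup, adjoin_self]

theorem span_subset_span_of_le {F E : IntermediateField K Ω} (h : F ≤ E) (s : Set Ω) :
    (Submodule.span F s : Set Ω) ⊆ Submodule.span E s := by
  intro x hx
  induction hx using Submodule.span_induction with
  | mem x hx => exact Submodule.subset_span hx
  | zero => exact zero_mem _
  | add x y _ _ hx hy => exact add_mem hx hy
  | smul c x _ hx => exact Submodule.smul_mem _ (⟨c, h c.2⟩ : E) hx

theorem coe_subset_span_range_basis {A : Type*} [Field A] [Algebra A Ω] {ι : Type*}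
    (X : IntermediateField A Ω) (b : Basis ι A X) :
    (X : Set Ω) ⊆ Submodule.span A (Set.range fun i => (b i : Ω)) :=
  fun x hx => b.apply_mem_span_range_comp X.val.toLinearMap ⟨x, hx⟩

/-- A span containing `1` and closed under multiplication is a subalgebra. -/
theorem adjoin_subset_span (A L : IntermediateField K Ω) [Algebra.IsAlgebraic K L]
    {ι : Type*} (b : ι → Ω) (one_mem : 1 ∈ Submodule.span A (Set.range b))
    (mul_mem : ∀ i j, b i * b j ∈ Submodule.span A (Set.range b))
    (hL : (L : Set Ω) ⊆ Submodule.span A (Set.range b)) :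
    (adjoin A (L : Set Ω) : Set Ω) ⊆ Submodule.span A (Set.range b) := by
  have hmul : ∀ x y, x ∈ Submodule.span A (Set.range b) →
      y ∈ Submodule.span A (Set.range b) → x * y ∈ Submodule.span A (Set.range b) := by
    have : Submodule.span A (Set.range b) * Submodule.span A (Set.range b) ≤
        Submodule.span A (Set.range b) := by
      rw [Submodule.span_mul_span, Submodule.span_le]
      rintro _ ⟨_, ⟨i, rfl⟩, _, ⟨j, rfl⟩, rfl⟩
      exact mul_mem i j
    exact fun x y hx hy => this (Submodule.mul_mem_mul hx hy)
  have := adjoin_intermediateField_toSubalgebra_of_isAlgebraic_right A L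
  intro x hx
  change x ∈ (adjoin A (L : Set Ω)).toSubalgebra at hx
  rw [this] at hx
  exact Algebra.adjoin_le (S := (Submodule.span A (Set.range b)).toSubalgebra one_mem hmul)
    hL hx

theorem finiteDimensional_adjoin_and_finrank_le (A L : IntermediateField K Ω)
    [Algebra.IsAlgebraic K L]
    {ι : Type*} [Fintype ι] (b : ι → Ω) (one_mem : 1 ∈ Submodule.span A (Set.range b))
    (mul_mem : ∀ i j, b i * b j ∈ Submodule.span A (Set.range b))
    (hL : (L : Set Ω) ⊆ Submodule.span A (Set.range b)) :
    FiniteDimensional A (adjoin A (L : Set Ω)) ∧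
      finrank A (adjoin A (L : Set Ω)) ≤ Fintype.card ι := by
  have hle : Subalgebra.toSubmodule (adjoin A (L : Set Ω)).toSubalgebra ≤
      Submodule.span A (Set.range b) := adjoin_subset_span A L b one_mem mul_mem hL
  have : FiniteDimensional A (Submodule.span A (Set.range b)) :=
    FiniteDimensional.span_of_finite A (Set.finite_range b)
  refine ⟨Submodule.finiteDimensional_of_le hle, ?_⟩
  calc finrank A (adjoin A (L : Set Ω))
      = finrank A (Subalgebra.toSubmodule (adjoin A (L : Set Ω)).toSubalgebra) := rfl
    _ ≤ finrank A (Submodule.span A (Set.range b)) := Submodule.finrank_mono hle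
    _ ≤ Fintype.card ι := finrank_range_le_card b

theorem exists_finiteDimensional_le_subset_span (E : IntermediateField K Ω)
    [Algebra.IsAlgebraic K E]
    {ι : Type*} [Fintype ι] (b : ι → Ω) {T : Set Ω} (hT : T.Finite)
    (hTE : T ⊆ Submodule.span E (Set.range b)) :
    ∃ F ≤ E, FiniteDimensional K F ∧ T ⊆ Submodule.span F (Set.range b) := by
  have hcoeff : ∀ t ∈ T, ∃ c : ι → E, ∑ i, c i • b i = t := fun t ht =>
    (Submodule.mem_span_range_iff_exists_fun E).1 (hTE ht)
  choose! c hc using hcoeff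
  let C : Set Ω := (fun q : Ω × ι => (c q.1 q.2 : Ω)) '' (T ×ˢ Set.univ)
  have hCE : C ⊆ E := by
    rintro _ ⟨q, -, rfl⟩
    exact (c q.1 q.2).2
  have : Finite C := ((hT.prod Set.finite_univ).image _).to_subtype
  refine ⟨adjoin K C, adjoin_le_iff.2 hCE, ?_, fun t ht => ?_⟩
  · exact finiteDimensional_adjoin fun x hx =>
      isIntegral_iff.1 (Algebra.IsAlgebraic.isAlgebraic (⟨x, hCE hx⟩ : E)).isIntegral
  · rw [← hc t ht]
    refine Submodule.sum_mem _ fun i _ => ?_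
    have hci : (c t i : Ω) ∈ adjoin K C := subset_adjoin K C ⟨(t, i), ⟨ht, trivial⟩, rfl⟩
    exact Submodule.smul_mem _ (⟨c t i, hci⟩ : adjoin K C) (Submodule.subset_span ⟨i, rfl⟩)

/-- Adjoining to `K` the `E`-coordinates, in an `E`-basis of `E(L)`, of the pairwise products
of that basis, of `1` and of a `K`-basis of `L` gives an `F` over which the basis still spans a
ring containing `L`; so `[F(L) : F] ≤ [E(L) : E]`, and the reverse inequality holds for any
`F ≤ E`. -/
theorem exists_finiteDimensional_le_relfinrank_sup_eq (E L : IntermediateField K Ω)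
    [Algebra.IsAlgebraic K E] [FiniteDimensional K L] :
    ∃ F ≤ E, FiniteDimensional K F ∧ F.relfinrank (F ⊔ L) = E.relfinrank (E ⊔ L) := by
  let l := Module.finBasis K L
  have hLl : ∀ A : IntermediateField K Ω,
      (L : Set Ω) ⊆ Submodule.span A (Set.range fun i => (l i : Ω)) :=
    fun A => (coe_subset_span_range_basis L l).trans (Submodule.span_le_restrictScalars K A _)
  obtain ⟨hEfin, -⟩ := finiteDimensional_adjoin_and_finrank_le E L (fun i => (l i : Ω))
    (hLl E L.one_mem) (fun i j => hLl E (L.mul_mem (l i).2 (l j).2)) (hLl E)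
  have := Module.Free.of_divisionRing E (adjoin E (L : Set Ω))
  let b := Module.finBasis E (adjoin E (L : Set Ω))
  have hELspan := coe_subset_span_range_basis _ b
  let T : Set Ω := Set.range (fun ij : _ × _ => (b ij.1 : Ω) * b ij.2) ∪
    insert 1 (Set.range fun i => (l i : Ω))
  have hT : T.Finite := (Set.finite_range _).union ((Set.finite_range _).insert 1)
  have hTN : T ⊆ adjoin E (L : Set Ω) := by
    rintro _ (⟨ij, rfl⟩ | rfl | ⟨i, rfl⟩)
    · exact mul_mem (b ij.1).2 (b ij.2).2
    · exact one_mem _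
    · exact subset_adjoin _ _ (l i).2
  obtain ⟨F, hFE, hFfin, hTF⟩ :=
    exists_finiteDimensional_le_subset_span E _ hT (hTN.trans hELspan)
  obtain ⟨hFLfin, hFle⟩ := finiteDimensional_adjoin_and_finrank_le F L _
    (hTF (Or.inr (Set.mem_insert _ _))) (fun i j => hTF (Or.inl ⟨(i, j), rfl⟩))
    ((hLl F).trans (Submodule.span_le.2 fun _ ⟨i, hi⟩ => hTF (Or.inr (Or.inr ⟨i, hi⟩))))
  have := Module.Free.of_divisionRing F (adjoin F (L : Set Ω))
  let b' := Module.finBasis F (adjoin F (L : Set Ω))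
  have hFLspan := (coe_subset_span_range_basis _ b').trans (span_subset_span_of_le hFE _)
  obtain ⟨-, hEle⟩ := finiteDimensional_adjoin_and_finrank_le E L _
    (hFLspan (one_mem _)) (fun i j => hFLspan (mul_mem (b' i).2 (b' j).2))
    ((subset_adjoin _ _).trans hFLspan)
  refine ⟨F, hFE, hFfin, ?_⟩
  rw [relfinrank_sup_eq_finrank_adjoin, relfinrank_sup_eq_finrank_adjoin]
  simp only [Fintype.card_fin] at hFle hEle
  exact le_antisymm hFle hEle

end IntermediateField

section

variable {K : Type u} [CommRing K] {Z : Scheme.{u}} {fZ : Z ⟶ Spec (CommRingCat.of K)}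

theorem HasPointOver.comp {A B : Type u} [CommRing A] [CommRing B] {φ : K →+* A}
    (h : HasPointOver fZ A φ) (ψ : A →+* B) : HasPointOver fZ B (ψ.comp φ) := by
  obtain ⟨g, hg⟩ := h
  refine ⟨Spec.map (CommRingCat.ofHom ψ) ≫ g, ?_⟩
  rw [Category.assoc, hg, ← Spec.map_comp]
  rfl

/-- A point with values in a field lies in an affine open `Spec R` of `Z`, and `R` is of finite
type over `K` because `Z` is locally of finite type. -/
theorem HasPointOver.exists_finiteType [LocallyOfFiniteType fZ] {M : Type u} [Field M]
    {φ : K →+* M} (h : HasPointOver fZ M φ) :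
    ∃ (R : CommRingCat.{u}) (θ : K →+* R) (ψ : R →+* M),
      θ.FiniteType ∧ ψ.comp θ = φ ∧ HasPointOver fZ R θ := by
  obtain ⟨g, hg⟩ := h
  obtain ⟨V, hV, hxV, -⟩ := Z.isBasis_affineOpens.exists_subset_of_mem_open
    (Set.mem_univ (g.base default)) isOpen_univ
  obtain ⟨V, hV, rfl⟩ := hV
  have hV : IsAffineOpen V := hV
  have hgV : Set.range g.base ⊆ Set.range hV.fromSpec.base := by
    rw [hV.range_fromSpec]
    rintro _ ⟨y, rfl⟩
    rwa [Subsingleton.elim y default]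
  have e : V ≤ fZ ⁻¹ᵁ ⊤ := le_top
  let θ : CommRingCat.of K ⟶ Γ(Z, V) :=
    (Scheme.ΓSpecIso (CommRingCat.of K)).inv ≫ fZ.appLE ⊤ V e
  have hθ : hV.fromSpec ≫ fZ = Spec.map θ := by
    rw [← IsAffineOpen.SpecMap_appLE_fromSpec fZ (isAffineOpen_top _) hV e,
      IsAffineOpen.fromSpec_top, Scheme.isoSpec_Spec_inv, ← Spec.map_comp]
  let ψ := Spec.preimage (IsOpenImmersion.lift hV.fromSpec g hgV)
  refine ⟨Γ(Z, V), θ.hom, ψ.hom, ?_, ?_, hV.fromSpec, hθ⟩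
  · exact RingHom.FiniteType.comp
      (fZ.finiteType_appLE (isAffineOpen_top _) hV e)
      (RingHom.FiniteType.of_surjective _
        (ConcreteCategory.bijective_of_isIso (Scheme.ΓSpecIso (CommRingCat.of K)).inv).2)
  · have : Spec.map (θ ≫ ψ) = Spec.map (CommRingCat.ofHom φ) := by
      rw [Spec.map_comp, Spec.map_preimage, ← hg, ← hθ, ← Category.assoc,
        IsOpenImmersion.lift_fac]
    exact congrArg CommRingCat.Hom.hom (Spec.map_injective this)

end

theorem HasPointOver.exists_finiteDimensional_le {K Ω : Type u} [Field K] [Field Ω]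
    [Algebra K Ω] [Algebra.IsAlgebraic K Ω] {Z : Scheme.{u}} {fZ : Z ⟶ Spec (CommRingCat.of K)}
    [LocallyOfFiniteType fZ] {M : IntermediateField K Ω}
    (h : HasPointOver fZ M (algebraMap K M)) :
    ∃ L ≤ M, FiniteDimensional K L ∧ HasPointOver fZ L (algebraMap K L) := by
  obtain ⟨R, θ, ψ, hθ, hψθ, hR⟩ := h.exists_finiteType
  let := θ.toAlgebra
  obtain ⟨s, hs⟩ := hθ.out
  let σ : R →ₐ[K] Ω :=
    (IsScalarTower.toAlgHom K M Ω).comp ⟨ψ, fun r => RingHom.congr_fun hψθ r⟩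
  let L := adjoin K (σ '' s)
  have hσL : ∀ a, σ a ∈ L := by
    intro a
    have ha : σ a ∈ (Algebra.adjoin K (s : Set R)).map σ := ⟨a, hs ▸ trivial, rfl⟩
    rw [AlgHom.map_adjoin] at ha
    exact algebra_adjoin_le_adjoin K _ ha
  refine ⟨L, adjoin_le_iff.2 ?_, ?_, ?_⟩
  · rintro _ ⟨a, -, rfl⟩
    exact (ψ a).2
  · exact finiteDimensional_adjoin fun x _ => Algebra.IsIntegral.isIntegral x
  · convert hR.comp ((σ : R →+* Ω).codRestrict L hσL)
    ext r
    exact (σ.commutes r).symm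

theorem statement11_general (K : Type u) [Field K]
    (Z : Scheme.{u}) (fZ : Z ⟶ Spec (CommRingCat.of K))
    [LocallyOfFiniteType fZ]
    (hSyl : ∀ p : ℕ, p.Prime →
      ∃ Kp : IntermediateField K (AlgebraicClosure K),
        Algebra.IsSeparable K Kp ∧
        (∀ F : IntermediateField K (AlgebraicClosure K), F ≤ Kp →
          FiniteDimensional K F → (Module.finrank K F).Coprime p) ∧
        HasGcdOne {n | ∃ M : IntermediateField Kp (AlgebraicClosure K),
          FiniteDimensional Kp M ∧ n = Module.finrank Kp M ∧
          HasPointOver fZ M ((algebraMap Kp M).comp (algebraMap K Kp))}) :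
    HasGcdOne {n | ∃ L : IntermediateField K (AlgebraicClosure K),
      FiniteDimensional K L ∧ n = Module.finrank K L ∧
      HasPointOver fZ L (algebraMap K L)} := by
  refine hasGcdOne_iff.2 fun p hp => ?_
  obtain ⟨Kp, -, hdeg, hKp⟩ := hSyl p hp
  obtain ⟨_, ⟨M, -, rfl, hMpt⟩, hpM⟩ := hasGcdOne_iff.1 hKp p hp
  obtain ⟨L, hLM, hL, hLpt⟩ :=
    HasPointOver.exists_finiteDimensional_le (M := M.restrictScalars K) hMpt
  obtain ⟨F, hFKp, hF, hFL⟩ := exists_finiteDimensional_le_relfinrank_sup_eq Kp L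
  have hdvd : Kp.relfinrank (Kp ⊔ L) ∣ Module.finrank Kp M := by
    rw [← relfinrank_restrictScalars]
    exact Dvd.intro _ (relfinrank_mul_relfinrank le_sup_left
      (sup_le (fun x hx => M.algebraMap_mem ⟨x, hx⟩) hLM))
  refine ⟨_, ⟨F ⊔ L, finiteDimensional_sup F L, rfl,
    hLpt.comp (IntermediateField.inclusion le_sup_right).toRingHom⟩, ?_⟩
  rw [← finrank_bot_mul_relfinrank (le_sup_left : F ≤ F ⊔ L), hFL]
  rintro hpdvd
  rcases hp.dvd_mul.1 hpdvd with hpF | hpKpL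
  · exact hp.coprime_iff_not_dvd.1 (hdeg F hFKp hF).symm hpF
  · exact hpM (hpKpL.trans hdvd)

/-- Let `K` be a field with fixed algebraic closure `K̄` and let `Z` be a scheme of finite type
over `K` (locally of finite type and quasi-compact over `Spec K`).  Assume that for every
prime `p` there is an algebraic separable extension `K_p` of `K` inside `K̄` such that every
finite intermediate field `F` with `K ⊆ F ⊆ K_p` has degree `[F : K]` prime to `p`, and such
that `gcd {[M : K_p] : M/K_p finite inside K̄ with Z(M) ≠ ∅} = 1`.  Then
`gcd {[L : K] : L/K finite inside K̄ with Z(L) ≠ ∅} = 1`, i.e. `Z` admits a zero-cycle of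
degree `1` over `K`. -/
theorem statement11 (K : Type u) [Field K]
    (Z : Scheme.{u}) (fZ : Z ⟶ Spec (CommRingCat.of K))
    [LocallyOfFiniteType fZ] [QuasiCompact fZ]
    (hSyl : ∀ p : ℕ, p.Prime →
      ∃ Kp : IntermediateField K (AlgebraicClosure K),
        Algebra.IsSeparable K Kp ∧
        (∀ F : IntermediateField K (AlgebraicClosure K), F ≤ Kp →
          FiniteDimensional K F → (Module.finrank K F).Coprime p) ∧
        HasGcdOne {n | ∃ M : IntermediateField Kp (AlgebraicClosure K),
          FiniteDimensional Kp M ∧ n = Module.finrank Kp M ∧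
          HasPointOver fZ M ((algebraMap Kp M).comp (algebraMap K Kp))}) :
    HasGcdOne {n | ∃ L : IntermediateField K (AlgebraicClosure K),
      FiniteDimensional K L ∧ n = Module.finrank K L ∧
      HasPointOver fZ L (algebraMap K L)} :=
  statement11_general K Z fZ hSyl
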